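/- Let T be a theory of S4F standpoint logic and F an S5 standpoint structure for the vocabulary of T. If F is a minimal model of T, then the partition (Φ, Ψ) of Sub□(T) with Ψ := {□_u φ ∈ Sub□(T) : F ⊩ □_u φ} and Φ := Sub□(T) \ Ψ satisfies conditions (C1), (C2), and (C3); in particular, Sub□(T) has a partition satisfying (C1), (C2), and (C3). -/

import Mathlib

/-- Formulas of S4F standpoint logic over atoms `A` and standpoint names `S`. -/
inductive SForm (A S : Type) : Type
  | atom : A → SForm A S
  | neg  : SForm A S → SForm A S
  | and  : SForm A S → SForm A S → SForm A S
  | box  : S → SForm A S → SForm A S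

/-- Expressions: formulas or sharpening statements `s ≼ u`. -/
inductive SExpr (A S : Type) : Type
  | form  : SForm A S → SExpr A S
  | sharp : S → S → SExpr A S

/-- S4F standpoint structures over a carrier type `P` of precisifications. -/
structure SFFS (A S P : Type) (star : S) where
  Pi : Set P
  sig : S → Set P
  tau : S → Set P
  val : P → Set A
  nonempty_Pi : Pi.Nonempty
  sig_sub : ∀ s, sig s ⊆ Pi
  tau_sub : ∀ s, tau s ⊆ Pi
  star_union : sig star ∪ tau star = Pi
  sig_nonempty : ∀ s, (sig s).Nonempty
  sig_tau_disj : ∀ s u, sig s ∩ tau u = ∅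

/-- Pointed satisfaction `F, π ⊩ φ` for formulas. -/
def SFFS.sat {A S P : Type} {star : S} (F : SFFS A S P star) : SForm A S → P → Prop
  | SForm.atom p, π => p ∈ F.val π
  | SForm.neg φ, π => ¬ F.sat φ π
  | SForm.and φ ψ, π => F.sat φ π ∧ F.sat ψ π
  | SForm.box s φ, π =>
      (π ∈ F.sig star → ∀ π' ∈ F.sig s, F.sat φ π') ∧
      (π ∈ F.tau star → ∀ π' ∈ F.sig s ∪ F.tau s, F.sat φ π')

/-- Pointed satisfaction for expressions. -/
def SFFS.satE {A S P : Type} {star : S} (F : SFFS A S P star) (e : SExpr A S) (π : P) : Prop :=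
  match e with
  | SExpr.form φ => F.sat φ π
  | SExpr.sharp s u => F.sig s ⊆ F.sig u ∧ F.tau s ⊆ F.tau u

/-- Global satisfaction `F ⊩ φ` of a formula. -/
def SFFS.models {A S P : Type} {star : S} (F : SFFS A S P star) (φ : SForm A S) : Prop :=
  ∀ π ∈ F.Pi, F.sat φ π

/-- Global satisfaction of an expression. -/
def SFFS.modelsE {A S P : Type} {star : S} (F : SFFS A S P star) (e : SExpr A S) : Prop :=
  ∀ π ∈ F.Pi, F.satE e π

/-- `F` is a model of a theory (set of expressions) `T`. -/
def SFFS.isModel {A S P : Type} {star : S} (F : SFFS A S P star) (T : Set (SExpr A S)) : Prop :=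
  ∀ e ∈ T, F.modelsE e

/-- `F` is a model of a set of formulas `T`. -/
def SFFS.isModelF {A S P : Type} {star : S} (F : SFFS A S P star) (T : Set (SForm A S)) : Prop :=
  ∀ φ ∈ T, F.models φ

/-- S5 standpoint structures: all outer sets empty. -/
def SFFS.IsS5 {A S P : Type} {star : S} (F : SFFS A S P star) : Prop :=
  ∀ s, F.tau s = ∅

/-- Determination preorder `F1 ⊴_s F2`, per standpoint. -/
def prefS {A S P1 P2 : Type} {star : S} (F1 : SFFS A S P1 star) (F2 : SFFS A S P2 star)
    (s : S) : Prop :=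
  F2.val '' F2.sig s = F1.val '' F1.sig s ∧
  F2.val '' F2.tau s ⊆ F1.val '' (F1.sig s ∪ F1.tau s)

/-- Determination preorder `F1 ⊴ F2`. -/
def pref {A S P1 P2 : Type} {star : S} (F1 : SFFS A S P1 star) (F2 : SFFS A S P2 star) : Prop :=
  ∀ s, prefS F1 F2 s

/-- Entailment `T ⊨ e`: every model of `T` satisfies `e`. -/
def Entails {A S : Type} (star : S) (T : Set (SExpr A S)) (e : SExpr A S) : Prop :=
  ∀ (P : Type) (F : SFFS A S P star), F.isModel T → F.modelsE e

/-- Derivable sharpening `T ⊢ s ≼ u`. -/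
inductive Sharpens {A S : Type} (star : S) (T : Set (SExpr A S)) : S → S → Prop
  | of_mem {s u : S} : SExpr.sharp s u ∈ T → Sharpens star T s u
  | to_star (s : S) : Sharpens star T s star
  | refl (s : S) : Sharpens star T s s
  | trans {s t u : S} : SExpr.sharp s t ∈ T → Sharpens star T t u → Sharpens star T s u

/-- An S5 standpoint structure `F` is a minimal model of a theory `T`. -/
def isMinimalModel {A S P : Type} {star : S} (F : SFFS A S P star) (T : Set (SExpr A S)) : Prop :=
  F.IsS5 ∧ F.isModel T ∧
  ∀ (P' : Type) (F' : SFFS A S P' star), pref F' F → F'.isModel T → (pref F' F ∧ pref F F')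

/-- The set of subformulas of a formula. -/
def subf {A S : Type} : SForm A S → Set (SForm A S)
  | SForm.atom p => {SForm.atom p}
  | SForm.neg φ => insert (SForm.neg φ) (subf φ)
  | SForm.and φ ψ => insert (SForm.and φ ψ) (subf φ ∪ subf ψ)
  | SForm.box s φ => insert (SForm.box s φ) (subf φ)

/-- Subformulas of an expression. -/
def subE {A S : Type} : SExpr A S → Set (SForm A S)
  | SExpr.form φ => subf φ
  | SExpr.sharp _ _ => ∅

/-- `Sub□(T)`: boxed subformulas of expressions of `T`. -/
def SubBox {A S : Type} (T : Set (SExpr A S)) : Set (SForm A S) :=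
  {χ | (∃ (s : S) (φ : SForm A S), χ = SForm.box s φ) ∧ ∃ e ∈ T, χ ∈ subE e}

/-- Propositional satisfaction over the extended vocabulary `A± = A ∪ Sub□(T)`:
boxed formulas are read as propositional atoms (valuation `EB`). -/
def psat {A S : Type} (EA : Set A) (EB : Set (SForm A S)) : SForm A S → Prop
  | SForm.atom p => p ∈ EA
  | SForm.neg φ => ¬ psat EA EB φ
  | SForm.and φ ψ => psat EA EB φ ∧ psat EA EB ψ
  | SForm.box s φ => SForm.box s φ ∈ EB

/-- Propositional satisfaction of expressions: sharpening statements are also read as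
propositional atoms (valuation `ES`). -/
def psatE {A S : Type} (EA : Set A) (EB : Set (SForm A S)) (ES : Set (S × S)) :
    SExpr A S → Prop
  | SExpr.form φ => psat EA EB φ
  | SExpr.sharp s u => (s, u) ∈ ES

/-- `Ψ_s := {ψ : □_u ψ ∈ Ψ for some u with T ⊢ s ≼ u}`. -/
def PsiS {A S : Type} (star : S) (T : Set (SExpr A S)) (Ψ : Set (SForm A S)) (s : S) :
    Set (SForm A S) :=
  {ψ | ∃ u : S, SForm.box u ψ ∈ Ψ ∧ Sharpens star T s u}

/-- `Θ_s := T ∪ {¬χ : χ ∈ Φ} ∪ Ψ ∪ Ψ_s`. -/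
def Theta {A S : Type} (star : S) (T : Set (SExpr A S)) (Φ Ψ : Set (SForm A S)) (s : S) :
    Set (SExpr A S) :=
  T ∪ (SExpr.form '' (SForm.neg '' Φ)) ∪ (SExpr.form '' Ψ) ∪
    (SExpr.form '' PsiS star T Ψ s)

/-- Condition (C1): each `Θ_s` is propositionally satisfiable. -/
def C1 {A S : Type} (star : S) (T : Set (SExpr A S)) (Φ Ψ : Set (SForm A S)) : Prop :=
  ∀ s : S, ∃ (EA : Set A) (EB : Set (SForm A S)) (ES : Set (S × S)),
    ∀ e ∈ Theta star T Φ Ψ s, psatE EA EB ES e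

/-- Condition (C2): for every `s` and `□_u φ ∈ Φ` with `T ⊢ u ≼ s`, the theory
`Θ_s ∪ {¬φ}` is propositionally satisfiable. -/
def C2 {A S : Type} (star : S) (T : Set (SExpr A S)) (Φ Ψ : Set (SForm A S)) : Prop :=
  ∀ (s u : S) (φ : SForm A S), SForm.box u φ ∈ Φ → Sharpens star T u s →
    ∃ (EA : Set A) (EB : Set (SForm A S)) (ES : Set (S × S)),
      (∀ e ∈ Theta star T Φ Ψ s, psatE EA EB ES e) ∧ psat EA EB (SForm.neg φ)

/-- Condition (C3): for every `□_s ψ ∈ Ψ`, `T ∪ {¬χ : χ ∈ Φ} ⊨ □_s ψ` in S4F standpoint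
logic. -/
def C3 {A S : Type} (star : S) (T : Set (SExpr A S)) (Φ Ψ : Set (SForm A S)) : Prop :=
  ∀ (s : S) (ψ : SForm A S), SForm.box s ψ ∈ Ψ →
    Entails star (T ∪ (SExpr.form '' (SForm.neg '' Φ)))
      (SExpr.form (SForm.box s ψ))

/-- Inner precisifications of `F_P`: `σ(s) := {F ∩ A : F ⊆ A±, F ⊨ Θ_s}`. -/
def sigP {A S : Type} (star : S) (T : Set (SExpr A S)) (Φ Ψ : Set (SForm A S)) (s : S) :
    Set (Set A) :=
  {EA | ∃ (EB : Set (SForm A S)) (ES : Set (S × S)),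
    ∀ e ∈ Theta star T Φ Ψ s, psatE EA EB ES e}

/-! (C1) and (C2) are witnessed by the valuations of single precisifications of `F`. For (C3),
let `G` be an S4F model of `T ∪ ¬Φ`. Grafting a family of precisifications of `G` onto `F` as
outer precisifications yields a model of `T` below `F` in `⊴`, as long as `G` evaluates the
boxes of `Sub□(T)` on that family the way the grafted structure does. Minimality of `F` then
forces every grafted valuation in `τ(u)` to be the valuation of some precisification of `F` in
`σ(u)`, and an induction over formulas built from `Sub□(T)` carries the truth of each `ψ` with
`□_u ψ ∈ Ψ` from `F` over to `G`. This is done first for the family `σ_G`, which settles the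
inner half of `□_u ψ`, and then for `τ_G`, where that inner half is what makes the boxes agree. -/

open Set

variable {A S P Q : Type} {star : S}

namespace SFFS

lemma notMem_sig_of_mem_tau (G : SFFS A S P star) {π : P} {s u : S} (hπ : π ∈ G.tau u) :
    π ∉ G.sig s :=
  fun hs => (G.sig_tau_disj s u).subset ⟨hs, hπ⟩

lemma sig_subset_sig_star (G : SFFS A S P star) (u : S) : G.sig u ⊆ G.sig star := by
  intro π hπ
  rcases G.star_union.symm.subset (G.sig_sub u hπ) with h | h
  · exact h
  · exact absurd hπ (G.notMem_sig_of_mem_tau h)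

lemma tau_subset_tau_star (G : SFFS A S P star) (u : S) : G.tau u ⊆ G.tau star := by
  intro π hπ
  rcases G.star_union.symm.subset (G.tau_sub u hπ) with h | h
  · exact absurd h (G.notMem_sig_of_mem_tau hπ)
  · exact h

lemma sig_star_eq_of_isS5 (G : SFFS A S P star) (h5 : G.IsS5) : G.sig star = G.Pi := by
  rw [← G.star_union, h5 star, union_empty]

lemma sat_box_of_mem_sig_star (G : SFFS A S P star) {π : P} (hπ : π ∈ G.sig star) (u : S)
    (χ : SForm A S) : G.sat (.box u χ) π ↔ ∀ π' ∈ G.sig u, G.sat χ π' :=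
  ⟨fun h => h.1 hπ,
    fun h => ⟨fun _ => h, fun h' => absurd hπ (G.notMem_sig_of_mem_tau h')⟩⟩

lemma sat_box_of_mem_tau_star (G : SFFS A S P star) {π : P} (hπ : π ∈ G.tau star) (u : S)
    (χ : SForm A S) : G.sat (.box u χ) π ↔ ∀ π' ∈ G.sig u ∪ G.tau u, G.sat χ π' :=
  ⟨fun h => h.2 hπ,
    fun h => ⟨fun h' => absurd h' (G.notMem_sig_of_mem_tau hπ), fun _ => h⟩⟩

lemma sat_box_of_isS5 (G : SFFS A S P star) (h5 : G.IsS5) {π : P} (hπ : π ∈ G.Pi) (u : S)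
    (χ : SForm A S) : G.sat (.box u χ) π ↔ ∀ π' ∈ G.sig u, G.sat χ π' :=
  G.sat_box_of_mem_sig_star (by rwa [G.sig_star_eq_of_isS5 h5]) u χ

lemma models_box_iff_of_isS5 (G : SFFS A S P star) (h5 : G.IsS5) (u : S) (χ : SForm A S) :
    G.models (.box u χ) ↔ ∀ π ∈ G.sig u, G.sat χ π :=
  have ⟨π₀, hπ₀⟩ := G.nonempty_Pi
  ⟨fun h => (G.sat_box_of_isS5 h5 hπ₀ u χ).1 (h π₀ hπ₀),
    fun h _ hπ => (G.sat_box_of_isS5 h5 hπ u χ).2 h⟩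

lemma sat_box_iff_models_of_isS5 (G : SFFS A S P star) (h5 : G.IsS5) {π : P} (hπ : π ∈ G.Pi)
    (u : S) (χ : SForm A S) : G.sat (.box u χ) π ↔ G.models (.box u χ) := by
  rw [G.models_box_iff_of_isS5 h5, G.sat_box_of_isS5 h5 hπ]

lemma models_box_of_forall (G : SFFS A S P star) {u : S} {χ : SForm A S}
    (h : ∀ π ∈ G.sig u ∪ G.tau u, G.sat χ π) : G.models (.box u χ) :=
  fun _ _ => ⟨fun _ π hπ => h π (Or.inl hπ), fun _ => h⟩

lemma sharp_of_isModel {T : Set (SExpr A S)} (G : SFFS A S P star) (hG : G.isModel T)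
    {a b : S} (h : .sharp a b ∈ T) : G.sig a ⊆ G.sig b ∧ G.tau a ⊆ G.tau b :=
  hG _ h _ G.nonempty_Pi.some_mem

lemma sig_subset_of_sharpens {T : Set (SExpr A S)} (G : SFFS A S P star) (hG : G.isModel T)
    {s u : S} (h : Sharpens star T s u) : G.sig s ⊆ G.sig u := by
  induction h with
  | of_mem h => exact (G.sharp_of_isModel hG h).1
  | to_star s => exact G.sig_subset_sig_star s
  | refl s => exact subset_rfl
  | trans h _ ih => exact (G.sharp_of_isModel hG h).1.trans ih

lemma psat_iff_sat (G : SFFS A S P star) (π : P) (φ : SForm A S) :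
    psat (G.val π) {χ | G.sat χ π} φ ↔ G.sat φ π := by
  induction φ with
  | atom p => rfl
  | neg φ ih => exact not_congr ih
  | and φ ψ ih₁ ih₂ => exact and_congr ih₁ ih₂
  | box s φ => rfl

lemma psatE_iff_satE (G : SFFS A S P star) (π : P) (e : SExpr A S) :
    psatE (G.val π) {χ | G.sat χ π} {p | G.satE (.sharp p.1 p.2) π} e ↔ G.satE e π := by
  cases e with
  | form φ => exact G.psat_iff_sat π φ
  | sharp a b => rfl

end SFFS

lemma subf_subset_subf_neg (φ : SForm A S) : subf φ ⊆ subf (.neg φ) :=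
  subset_insert _ _

lemma subf_subset_subf_and_left (φ ψ : SForm A S) : subf φ ⊆ subf (.and φ ψ) :=
  subset_union_left.trans (subset_insert _ _)

lemma subf_subset_subf_and_right (φ ψ : SForm A S) : subf ψ ⊆ subf (.and φ ψ) :=
  subset_union_right.trans (subset_insert _ _)

lemma subf_subset_subf_box (s : S) (φ : SForm A S) : subf φ ⊆ subf (.box s φ) :=
  subset_insert _ _

lemma subf_subset_of_mem_subf {φ ψ : SForm A S} (h : ψ ∈ subf φ) : subf ψ ⊆ subf φ := by
  induction φ with
  | atom p => rw [mem_singleton_iff.mp h]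
  | neg φ ih => exact h.elim (· ▸ subset_rfl) fun h => (ih h).trans (subf_subset_subf_neg φ)
  | and φ₁ φ₂ ih₁ ih₂ =>
    rcases h with h | h | h
    · exact h ▸ subset_rfl
    · exact (ih₁ h).trans (subf_subset_subf_and_left φ₁ φ₂)
    · exact (ih₂ h).trans (subf_subset_subf_and_right φ₁ φ₂)
  | box s φ ih =>
    exact h.elim (· ▸ subset_rfl) fun h => (ih h).trans (subf_subset_subf_box s φ)

lemma mem_subf_self (φ : SForm A S) : φ ∈ subf φ := by
  cases φ <;> simp [subf]

def subformulas (T : Set (SExpr A S)) : Set (SForm A S) :=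
  {χ | ∃ e ∈ T, χ ∈ subE e}

lemma subf_subset_subformulas {T : Set (SExpr A S)} {χ : SForm A S} (h : χ ∈ subformulas T) :
    subf χ ⊆ subformulas T := by
  obtain ⟨e, he, hχ⟩ := h
  cases e with
  | form φ => exact fun ψ hψ => ⟨.form φ, he, subf_subset_of_mem_subf hχ hψ⟩
  | sharp a b => exact absurd hχ (notMem_empty χ)

lemma subf_subset_subformulas_of_form_mem {T : Set (SExpr A S)} {φ : SForm A S}
    (h : .form φ ∈ T) : subf φ ⊆ subformulas T :=
  fun _ hψ => ⟨.form φ, h, hψ⟩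

lemma mem_SubBox_of_subf_subset {T : Set (SExpr A S)} {u : S} {χ : SForm A S}
    (h : subf (.box u χ) ⊆ subformulas T) : .box u χ ∈ SubBox T :=
  ⟨⟨u, χ, rfl⟩, h (mem_subf_self _)⟩

/-- The class `Ψ` of the partition. -/
def trueBoxes (T : Set (SExpr A S)) (F : SFFS A S P star) : Set (SForm A S) :=
  {χ ∈ SubBox T | F.models χ}

/-- The class `Φ` of the partition. -/
def falseBoxes (T : Set (SExpr A S)) (F : SFFS A S P star) : Set (SForm A S) :=
  SubBox T \ trueBoxes T F

section C1C2

variable {T : Set (SExpr A S)} {F : SFFS A S P star}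

lemma satE_of_mem_Theta (h5 : F.IsS5) (hF : F.isModel T) {s : S} {π : P} (hπ : π ∈ F.sig s)
    {e : SExpr A S} (he : e ∈ Theta star T (falseBoxes T F) (trueBoxes T F) s) :
    F.satE e π := by
  have hπ' : π ∈ F.Pi := F.sig_sub s hπ
  rcases he with ((he | ⟨_, ⟨χ, ⟨hχ, hχΨ⟩, rfl⟩, rfl⟩) | ⟨χ, hχ, rfl⟩) |
    ⟨ψ, ⟨u, hu, hsu⟩, rfl⟩
  · exact hF e he π hπ'
  · obtain ⟨⟨u, φ, rfl⟩, -⟩ := id hχ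
    exact fun hsat => hχΨ ⟨hχ, (F.sat_box_iff_models_of_isS5 h5 hπ' u φ).1 hsat⟩
  · exact hχ.2 π hπ'
  · exact (F.models_box_iff_of_isS5 h5 u ψ).1 hu.2 π (F.sig_subset_of_sharpens hF hsu hπ)

lemma psatE_of_mem_Theta (h5 : F.IsS5) (hF : F.isModel T) {s : S} {π : P}
    (hπ : π ∈ F.sig s) :
    ∀ e ∈ Theta star T (falseBoxes T F) (trueBoxes T F) s,
      psatE (F.val π) {χ | F.sat χ π} {p | F.satE (.sharp p.1 p.2) π} e :=
  fun e he => (F.psatE_iff_satE π e).2 (satE_of_mem_Theta h5 hF hπ he)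

lemma C1_of_isS5_isModel (h5 : F.IsS5) (hF : F.isModel T) :
    C1 star T (falseBoxes T F) (trueBoxes T F) := fun s =>
  have ⟨_, hπ⟩ := F.sig_nonempty s
  ⟨_, _, _, psatE_of_mem_Theta h5 hF hπ⟩

lemma C2_of_isS5_isModel (h5 : F.IsS5) (hF : F.isModel T) :
    C2 star T (falseBoxes T F) (trueBoxes T F) := by
  intro s u φ hΦ hus
  obtain ⟨π, hπ, hφ⟩ : ∃ π ∈ F.sig u, ¬ F.sat φ π := by
    by_contra! h
    exact hΦ.2 ⟨hΦ.1, (F.models_box_iff_of_isS5 h5 u φ).2 h⟩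
  exact ⟨_, _, _, psatE_of_mem_Theta h5 hF (F.sig_subset_of_sharpens hF hus hπ),
    (not_congr (F.psat_iff_sat π φ)).2 hφ⟩

end C1C2

namespace SFFS

def graft (F : SFFS A S P star) (G : SFFS A S Q star) (t : S → Set Q)
    (ht : ∀ u, t u ⊆ t star) : SFFS A S (P ⊕ Q) star where
  Pi := Sum.inl '' F.sig star ∪ Sum.inr '' t star
  sig u := Sum.inl '' F.sig u
  tau u := Sum.inr '' t u
  val := Sum.elim F.val G.val
  nonempty_Pi := ((F.sig_nonempty star).image _).mono subset_union_left
  sig_sub u := (image_mono (F.sig_subset_sig_star u)).trans subset_union_left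
  tau_sub u := (image_mono (ht u)).trans subset_union_right
  star_union := rfl
  sig_nonempty u := (F.sig_nonempty u).image _
  sig_tau_disj _ _ := by
    rw [← disjoint_iff_inter_eq_empty]
    exact isCompl_range_inl_range_inr.disjoint.mono (image_subset_range _ _)
      (image_subset_range _ _)

variable (F : SFFS A S P star) (G : SFFS A S Q star) (t : S → Set Q) (ht : ∀ u, t u ⊆ t star)

lemma graft_sat_inl (φ : SForm A S) :
    ∀ π ∈ F.sig star, (F.graft G t ht).sat φ (.inl π) ↔ F.sat φ π := by
  induction φ with
  | atom p => exact fun _ _ => Iff.rfl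
  | neg φ ih => exact fun π hπ => not_congr (ih π hπ)
  | and φ ψ ih₁ ih₂ => exact fun π hπ => and_congr (ih₁ π hπ) (ih₂ π hπ)
  | box u χ ih =>
    intro π hπ
    rw [sat_box_of_mem_sig_star _ (mem_image_of_mem _ hπ), sat_box_of_mem_sig_star _ hπ]
    exact forall_mem_image.trans
      (forall₂_congr fun π' hπ' => ih π' (F.sig_subset_sig_star u hπ'))

lemma graft_sat_box_inr {q : Q} (hq : q ∈ t star) (u : S) (χ : SForm A S) :
    (F.graft G t ht).sat (.box u χ) (.inr q) ↔
      (∀ π ∈ F.sig u, F.sat χ π) ∧ ∀ q' ∈ t u, (F.graft G t ht).sat χ (.inr q') := by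
  rw [sat_box_of_mem_tau_star _ (mem_image_of_mem _ hq)]
  exact forall₂_or_left.trans <| and_congr (forall_mem_image.trans
      (forall₂_congr fun π hπ => F.graft_sat_inl G t ht χ π (F.sig_subset_sig_star u hπ)))
    forall_mem_image

end SFFS

/-- On the precisifications `t`, `G` evaluates the boxes of `Sub□(T)` as `F.graft G t` does. -/
def GraftAgrees (T : Set (SExpr A S)) (F : SFFS A S P star) (G : SFFS A S Q star)
    (t : S → Set Q) : Prop :=
  ∀ u χ, .box u χ ∈ SubBox T → ∀ q ∈ t star,
    (G.sat (.box u χ) q ↔ (∀ π ∈ F.sig u, F.sat χ π) ∧ ∀ q' ∈ t u, G.sat χ q')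

section Graft

variable {T : Set (SExpr A S)} {F : SFFS A S P star} {G : SFFS A S Q star} {t : S → Set Q}

lemma graft_sat_inr_iff {ht : ∀ u, t u ⊆ t star} (hagree : GraftAgrees T F G t)
    (φ : SForm A S) (hφ : subf φ ⊆ subformulas T) :
    ∀ q ∈ t star, (F.graft G t ht).sat φ (.inr q) ↔ G.sat φ q := by
  induction φ with
  | atom p => exact fun _ _ => Iff.rfl
  | neg φ ih => exact fun q hq => not_congr (ih ((subf_subset_subf_neg φ).trans hφ) q hq)
  | and φ ψ ih₁ ih₂ =>
    exact fun q hq => and_congr (ih₁ ((subf_subset_subf_and_left φ ψ).trans hφ) q hq)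
      (ih₂ ((subf_subset_subf_and_right φ ψ).trans hφ) q hq)
  | box u χ ih =>
    intro q hq
    rw [SFFS.graft_sat_box_inr _ _ _ _ hq, hagree u χ (mem_SubBox_of_subf_subset hφ) q hq]
    exact and_congr_right' (forall₂_congr fun q' hq' =>
      ih ((subf_subset_subf_box u χ).trans hφ) q' (ht u hq'))

lemma graft_isModel {ht : ∀ u, t u ⊆ t star} (hF : F.isModel T) (hG : G.isModel T)
    (htG : t star ⊆ G.Pi) (ht_mono : ∀ a b, .sharp a b ∈ T → t a ⊆ t b)
    (hagree : GraftAgrees T F G t) :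
    (F.graft G t ht).isModel T := by
  intro e he x hx
  cases e with
  | form φ =>
    rcases hx with ⟨π, hπ, rfl⟩ | ⟨q, hq, rfl⟩
    · exact (F.graft_sat_inl G t ht φ π hπ).2 (hF _ he π (F.sig_sub star hπ))
    · exact (graft_sat_inr_iff hagree φ (subf_subset_subformulas_of_form_mem he) q hq).2
        (hG _ he q (htG hq))
  | sharp a b =>
    exact ⟨image_mono (F.sharp_of_isModel hF he).1, image_mono (ht_mono a b he)⟩

lemma image_val_subset_of_isMinimalModel {ht : ∀ u, t u ⊆ t star} (hmin : isMinimalModel F T)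
    (hmodel : (F.graft G t ht).isModel T) (u : S) : G.val '' t u ⊆ F.val '' F.sig u := by
  have hbelow : pref (F.graft G t ht) F := fun s =>
    ⟨by simp only [SFFS.graft, image_image, Sum.elim_inl],
     by simp only [hmin.1 s, image_empty, empty_subset]⟩
  have habove := ((hmin.2.2 _ _ hbelow hmodel).2 u).2
  simpa only [SFFS.graft, image_image, Sum.elim_inr, hmin.1 u, union_empty] using habove

lemma sat_iff_of_val_eq (ht : ∀ u, t u ⊆ t star) (h5 : F.IsS5) (hagree : GraftAgrees T F G t)
    (hval : ∀ u, G.val '' t u ⊆ F.val '' F.sig u) (φ : SForm A S)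
    (hφ : subf φ ⊆ subformulas T) :
    ∀ q ∈ t star, ∀ π ∈ F.Pi, G.val q = F.val π → (G.sat φ q ↔ F.sat φ π) := by
  induction φ with
  | atom p => exact fun q _ π _ hqπ => by simp only [SFFS.sat, hqπ]
  | neg φ ih =>
    exact fun q hq π hπ hqπ =>
      not_congr (ih ((subf_subset_subf_neg φ).trans hφ) q hq π hπ hqπ)
  | and φ ψ ih₁ ih₂ =>
    exact fun q hq π hπ hqπ => and_congr
      (ih₁ ((subf_subset_subf_and_left φ ψ).trans hφ) q hq π hπ hqπ)
      (ih₂ ((subf_subset_subf_and_right φ ψ).trans hφ) q hq π hπ hqπ)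
  | box u χ ih =>
    intro q hq π hπ _
    rw [hagree u χ (mem_SubBox_of_subf_subset hφ) q hq, F.sat_box_of_isS5 h5 hπ,
      and_iff_left_iff_imp]
    intro hF q' hq'
    obtain ⟨π', hπ', hval'⟩ := hval u (mem_image_of_mem _ hq')
    exact (ih ((subf_subset_subf_box u χ).trans hφ) q' (ht u hq') π' (F.sig_sub u hπ')
      hval'.symm).2 (hF π' hπ')

lemma sat_of_mem_trueBoxes (ht : ∀ u, t u ⊆ t star) (hmin : isMinimalModel F T)
    (hG : G.isModel T) (htG : t star ⊆ G.Pi) (ht_mono : ∀ a b, .sharp a b ∈ T → t a ⊆ t b)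
    (hagree : GraftAgrees T F G t) {u : S} {χ : SForm A S} (hχ : .box u χ ∈ trueBoxes T F) :
    ∀ q ∈ t u, G.sat χ q := by
  have hmodel := graft_isModel (ht := ht) hmin.2.1 hG htG ht_mono hagree
  have hval := image_val_subset_of_isMinimalModel hmin hmodel
  have hχT : subf χ ⊆ subformulas T :=
    (subf_subset_subf_box u χ).trans (subf_subset_subformulas hχ.1.2)
  intro q hq
  obtain ⟨π, hπ, hqπ⟩ := hval u (mem_image_of_mem _ hq)
  exact (sat_iff_of_val_eq ht hmin.1 hagree hval χ hχT q (ht u hq) π (F.sig_sub u hπ)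
    hqπ.symm).2 ((F.models_box_iff_of_isS5 hmin.1 u χ).1 hχ.2 π hπ)

/-- The boxes false in `F` are false in `G`, so only the boxes in `Ψ` have to be checked. -/
lemma graftAgrees_of_sat_box_iff (h5 : F.IsS5)
    (hneg : ∀ χ ∈ falseBoxes T F, ∀ q ∈ G.Pi, ¬ G.sat χ q) (htG : t star ⊆ G.Pi)
    (hΨ : ∀ u χ, .box u χ ∈ trueBoxes T F → ∀ q ∈ t star,
      (G.sat (.box u χ) q ↔ ∀ q' ∈ t u, G.sat χ q')) :
    GraftAgrees T F G t := by
  intro u χ hsub q hq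
  by_cases htrue : F.models (.box u χ)
  · rw [hΨ u χ ⟨hsub, htrue⟩ q hq,
      and_iff_right ((F.models_box_iff_of_isS5 h5 u χ).1 htrue)]
  · exact iff_of_false (hneg _ ⟨hsub, fun h => htrue h.2⟩ q (htG hq))
      fun h => htrue ((F.models_box_iff_of_isS5 h5 u χ).2 h.1)

end Graft

lemma C3_of_isMinimalModel {T : Set (SExpr A S)} {F : SFFS A S P star}
    (hmin : isMinimalModel F T) : C3 star T (falseBoxes T F) (trueBoxes T F) := by
  intro s ψ hψ R G hGmodel
  have hG : G.isModel T := fun e he => hGmodel e (Or.inl he)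
  have hneg : ∀ χ ∈ falseBoxes T F, ∀ q ∈ G.Pi, ¬ G.sat χ q :=
    fun χ hχ => hGmodel _ (Or.inr ⟨_, ⟨χ, hχ, rfl⟩, rfl⟩)
  have hsig : ∀ u χ, .box u χ ∈ trueBoxes T F → ∀ q ∈ G.sig u, G.sat χ q :=
    fun u χ => sat_of_mem_trueBoxes G.sig_subset_sig_star hmin hG (G.sig_sub star)
      (fun a b h => (G.sharp_of_isModel hG h).1)
      (graftAgrees_of_sat_box_iff hmin.1 hneg (G.sig_sub star)
        fun u χ _ q hq => G.sat_box_of_mem_sig_star hq u χ)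
  have htau : ∀ q ∈ G.tau s, G.sat ψ q :=
    sat_of_mem_trueBoxes G.tau_subset_tau_star hmin hG (G.tau_sub star)
      (fun a b h => (G.sharp_of_isModel hG h).2)
      (graftAgrees_of_sat_box_iff hmin.1 hneg (G.tau_sub star)
        fun u χ hχ q hq => (G.sat_box_of_mem_tau_star hq u χ).trans
          (forall₂_or_left.trans (and_iff_right (hsig u χ hχ)))) hψ
  exact G.models_box_of_forall fun q hq => hq.elim (hsig s ψ hψ q) (htau q)

/-- if the S5 standpoint structure `F` is a minimal model of `T`, then the
partition `(Φ, Ψ)` of `Sub□(T)` with `Ψ := {□_u φ ∈ Sub□(T) : F ⊩ □_u φ}` and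
`Φ := Sub□(T) \ Ψ` satisfies (C1), (C2) and (C3); in particular such a partition exists. -/
theorem minimal_model_gives_partition_C1_C2_C3 {A S P : Type} (star : S)
    (T : Set (SExpr A S)) (F : SFFS A S P star) (hmin : isMinimalModel F T) :
    (C1 star T (SubBox T \ {χ ∈ SubBox T | F.models χ}) {χ ∈ SubBox T | F.models χ} ∧
     C2 star T (SubBox T \ {χ ∈ SubBox T | F.models χ}) {χ ∈ SubBox T | F.models χ} ∧
     C3 star T (SubBox T \ {χ ∈ SubBox T | F.models χ}) {χ ∈ SubBox T | F.models χ}) ∧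
    (∃ Φ Ψ : Set (SForm A S), Φ ∪ Ψ = SubBox T ∧ Disjoint Φ Ψ ∧
       C1 star T Φ Ψ ∧ C2 star T Φ Ψ ∧ C3 star T Φ Ψ) := by
  have hC1 := C1_of_isS5_isModel hmin.1 hmin.2.1
  have hC2 := C2_of_isS5_isModel hmin.1 hmin.2.1
  have hC3 := C3_of_isMinimalModel hmin
  exact ⟨⟨hC1, hC2, hC3⟩, falseBoxes T F, trueBoxes T F,
    sdiff_union_of_subset fun _ hχ => hχ.1, disjoint_sdiff_left, hC1, hC2, hC3⟩
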